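/- For any positive integers k and b, there exists a finite simple graph G with no isolated vertices such that both b_t^k(G) and b_t^{k+1}(G) exist and b_t^{k+1}(G) = b_t^k(G) + b. -/

import Mathlib

/-!
The graph is `k` disjoint copies of a gadget: an edge `uv` with a pendant leaf at each end
and `b` further vertices `w₁, …, w_b` adjacent to both `u` and `v`. The leaves force `u` and
`v` into every total dominating set, so `γ_t = 2k`. Deleting edges inside one copy raises its
total domination number by at most two: by one once `uv` is gone, and by two only if moreover
every `wⱼ` has lost an edge, which takes at least `b + 1` deleted edges. Hence raising `γ_t` by
`k` costs `k` edges (delete every `uv`), while raising it by `k + 1` forces some copy up by two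
and costs `k + b` edges (delete every `uv` and all the edges `uwⱼ` of one copy).
-/

open SimpleGraph

/-- A set `S` of vertices is a total dominating set of `G` if every vertex of `G`
is adjacent to at least one vertex of `S`. -/
def IsTotalDominatingSet {V : Type*} (G : SimpleGraph V) (S : Set V) : Prop :=
  ∀ v : V, ∃ u ∈ S, G.Adj v u

/-- The total domination number of `G`: the minimum cardinality of a total
dominating set of `G`. -/
noncomputable def totalDominationNumber {V : Type*} (G : SimpleGraph V) : ℕ :=
  sInf {n : ℕ | ∃ S : Set V, S.ncard = n ∧ IsTotalDominatingSet G S}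

/-- A graph has no isolated vertices if every vertex has a neighbor. -/
def NoIsolatedVerts {V : Type*} (G : SimpleGraph V) : Prop :=
  ∀ v : V, ∃ u : V, G.Adj v u

/-- The `k`-total bondage number of `G`: the minimum cardinality of a set `F` of
edges of `G` such that `G − F` has no isolated vertices and the total domination
number of `G − F` is at least `γ_t(G) + k`. -/
noncomputable def kTotalBondage {V : Type*} (G : SimpleGraph V) (k : ℕ) : ℕ :=
  sInf {m : ℕ | ∃ F : Set (Sym2 V), F ⊆ G.edgeSet ∧ F.ncard = m ∧
    NoIsolatedVerts (G.deleteEdges F) ∧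
    totalDominationNumber G + k ≤ totalDominationNumber (G.deleteEdges F)}

section TotalDomination

variable {V : Type*} {G G' : SimpleGraph V}

lemma NoIsolatedVerts.mono (hG : NoIsolatedVerts G) (h : G ≤ G') : NoIsolatedVerts G' :=
  fun x ↦ (hG x).imp fun _ hxy ↦ h hxy

lemma totalDominationNumber_le_ncard {S : Set V} (hS : IsTotalDominatingSet G S) :
    totalDominationNumber G ≤ S.ncard :=
  Nat.sInf_le ⟨S, rfl, hS⟩

lemma NoIsolatedVerts.isTotalDominatingSet_univ (hG : NoIsolatedVerts G) :
    IsTotalDominatingSet G Set.univ :=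
  fun x ↦ (hG x).imp fun _ hy ↦ ⟨trivial, hy⟩

lemma le_totalDominationNumber (hG : NoIsolatedVerts G) {n : ℕ}
    (h : ∀ S, IsTotalDominatingSet G S → n ≤ S.ncard) : n ≤ totalDominationNumber G :=
  le_csInf ⟨_, Set.univ, rfl, hG.isTotalDominatingSet_univ⟩
    fun _ ⟨S, hn, hS⟩ ↦ hn ▸ h S hS

lemma NoIsolatedVerts.exists_isTotalDominatingSet_ncard_eq (hG : NoIsolatedVerts G) :
    ∃ S, IsTotalDominatingSet G S ∧ S.ncard = totalDominationNumber G := by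
  obtain ⟨S, hn, hS⟩ := Nat.sInf_mem (s := {n | ∃ S : Set V, S.ncard = n ∧
    IsTotalDominatingSet G S}) ⟨_, Set.univ, rfl, hG.isTotalDominatingSet_univ⟩
  exact ⟨S, hS, hn⟩

lemma totalDominationNumber_le_ncard_add_ncard [Finite V] (hG : NoIsolatedVerts G)
    {S R : Set V} (hS : ∀ x ∉ R, ∃ y ∈ S, G.Adj x y) :
    totalDominationNumber G ≤ S.ncard + R.ncard := by
  choose nbr hnbr using hG
  calc totalDominationNumber G ≤ (S ∪ nbr '' R).ncard := by
        refine totalDominationNumber_le_ncard fun x ↦ ?_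
        by_cases hx : x ∈ R
        · exact ⟨nbr x, Or.inr ⟨x, hx, rfl⟩, hnbr x⟩
        · obtain ⟨y, hy, hxy⟩ := hS x hx
          exact ⟨y, Or.inl hy, hxy⟩
    _ ≤ S.ncard + (nbr '' R).ncard := Set.ncard_union_le _ _
    _ ≤ S.ncard + R.ncard := Nat.add_le_add_left (Set.ncard_image_le R.toFinite) _

lemma kTotalBondage_eq_of_forall_le {k m : ℕ}
    (h₀ : ∃ F ⊆ G.edgeSet, F.ncard = m ∧ NoIsolatedVerts (G.deleteEdges F) ∧
      totalDominationNumber G + k ≤ totalDominationNumber (G.deleteEdges F))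
    (hmin : ∀ F ⊆ G.edgeSet, NoIsolatedVerts (G.deleteEdges F) →
      totalDominationNumber G + k ≤ totalDominationNumber (G.deleteEdges F) → m ≤ F.ncard) :
    kTotalBondage G k = m :=
  le_antisymm (Nat.sInf_le h₀) (le_csInf ⟨m, h₀⟩ fun _ ⟨F, hF, hn, hFG, hFγ⟩ ↦
    hn ▸ hmin F hF hFG hFγ)

end TotalDomination

section DisjointUnion

variable {ι W : Type*}

lemma Sym2.map_prodMk_injective :
    Function.Injective fun p : ι × Sym2 W ↦ Sym2.map (Prod.mk p.1) p.2 := by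
  rintro ⟨i, e⟩ ⟨i', e'⟩ h
  induction e using Sym2.ind
  induction e' using Sym2.ind
  simp only [Sym2.map_mk, Sym2.eq_iff, Prod.mk.injEq] at h
  aesop

def disjointUnion (H : ι → SimpleGraph W) : SimpleGraph (ι × W) where
  Adj p q := p.1 = q.1 ∧ (H p.1).Adj p.2 q.2
  symm := ⟨fun _ _ ⟨hpq, h⟩ ↦ ⟨hpq.symm, hpq ▸ h.symm⟩⟩
  loopless := ⟨fun _ ⟨_, h⟩ ↦ (H _).irrefl h⟩

@[simp] lemma disjointUnion_adj {H : ι → SimpleGraph W} {i i' : ι} {x y : W} :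
    (disjointUnion H).Adj (i, x) (i', y) ↔ i = i' ∧ (H i).Adj x y :=
  Iff.rfl

def restrictEdges (F : Set (Sym2 (ι × W))) (i : ι) : Set (Sym2 W) :=
  Sym2.map (Prod.mk i) ⁻¹' F

def liftEdges (F : ι → Set (Sym2 W)) : Set (Sym2 (ι × W)) :=
  ⋃ i, Sym2.map (Prod.mk i) '' F i

lemma restrictEdges_liftEdges (F : ι → Set (Sym2 W)) (i : ι) :
    restrictEdges (liftEdges F) i = F i := by
  ext e
  simp only [restrictEdges, liftEdges, Set.mem_preimage, Set.mem_iUnion, Set.mem_image]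
  refine ⟨fun ⟨i', e', he', h⟩ ↦ ?_, fun he ↦ ⟨i, e, he, rfl⟩⟩
  cases Sym2.map_prodMk_injective (a₁ := (i', e')) (a₂ := (i, e)) h
  exact he'

lemma disjointUnion_deleteEdges (H : ι → SimpleGraph W) (F : Set (Sym2 (ι × W))) :
    (disjointUnion H).deleteEdges F =
      disjointUnion fun i ↦ (H i).deleteEdges (restrictEdges F i) := by
  ext ⟨i, x⟩ ⟨i', y⟩
  simp only [SimpleGraph.deleteEdges_adj, disjointUnion_adj, restrictEdges, Set.mem_preimage,
    Sym2.map_mk]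
  constructor
  · rintro ⟨⟨rfl, h⟩, hF⟩; exact ⟨rfl, h, hF⟩
  · rintro ⟨rfl, h, hF⟩; exact ⟨⟨rfl, h⟩, hF⟩

lemma disjointUnion_deleteEdges_liftEdges (H : ι → SimpleGraph W) (F : ι → Set (Sym2 W)) :
    (disjointUnion H).deleteEdges (liftEdges F) =
      disjointUnion fun i ↦ (H i).deleteEdges (F i) := by
  simp only [disjointUnion_deleteEdges, restrictEdges_liftEdges]

lemma liftEdges_subset_edgeSet {H : ι → SimpleGraph W} {F : ι → Set (Sym2 W)}
    (hF : ∀ i, F i ⊆ (H i).edgeSet) : liftEdges F ⊆ (disjointUnion H).edgeSet := by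
  rintro _ ⟨_, ⟨i, rfl⟩, e, he, rfl⟩
  induction e using Sym2.ind with
  | h x y => exact ⟨rfl, hF i he⟩

lemma noIsolatedVerts_disjointUnion_iff {H : ι → SimpleGraph W} :
    NoIsolatedVerts (disjointUnion H) ↔ ∀ i, NoIsolatedVerts (H i) := by
  refine ⟨fun h i x ↦ ?_, fun h ⟨i, x⟩ ↦ ?_⟩
  · obtain ⟨⟨_, y⟩, rfl, hxy⟩ := h (i, x)
    exact ⟨y, hxy⟩
  · obtain ⟨y, hxy⟩ := h i x
    exact ⟨(i, y), rfl, hxy⟩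

lemma isTotalDominatingSet_disjointUnion_iff {H : ι → SimpleGraph W} {S : Set (ι × W)} :
    IsTotalDominatingSet (disjointUnion H) S ↔
      ∀ i, IsTotalDominatingSet (H i) {x | (i, x) ∈ S} := by
  refine ⟨fun h i x ↦ ?_, fun h ⟨i, x⟩ ↦ ?_⟩
  · obtain ⟨⟨_, y⟩, hy, rfl, hxy⟩ := h (i, x)
    exact ⟨y, hy, hxy⟩
  · obtain ⟨y, hy, hxy⟩ := h i x
    exact ⟨(i, y), hy, rfl, hxy⟩

lemma noIsolatedVerts_deleteEdges_restrictEdges {H : ι → SimpleGraph W}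
    {F : Set (Sym2 (ι × W))} (hF : NoIsolatedVerts ((disjointUnion H).deleteEdges F)) (i : ι) :
    NoIsolatedVerts ((H i).deleteEdges (restrictEdges F i)) := by
  rw [disjointUnion_deleteEdges, noIsolatedVerts_disjointUnion_iff] at hF
  exact hF i

variable [Fintype ι] [Finite W]

lemma ncard_eq_sum_ncard_fiber (S : Set (ι × W)) :
    S.ncard = ∑ i, {x | (i, x) ∈ S}.ncard := by
  have hS : S = ⋃ i, Prod.mk i '' {x | (i, x) ∈ S} := by
    ext ⟨i, x⟩; simp
  conv_lhs => rw [hS]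
  rw [Set.ncard_iUnion_of_finite (fun _ ↦ Set.toFinite _), finsum_eq_sum_of_fintype]
  · simp only [Set.ncard_image_of_injective _ (Prod.mk_right_injective _)]
  · intro i j hij
    simp only [Function.onFun]
    rw [Set.disjoint_left]
    rintro _ ⟨x, -, rfl⟩ ⟨y, -, h⟩
    exact hij (congrArg Prod.fst h).symm

lemma ncard_liftEdges (F : ι → Set (Sym2 W)) :
    (liftEdges F).ncard = ∑ i, (F i).ncard := by
  have h : liftEdges F =
      (fun p : ι × Sym2 W ↦ Sym2.map (Prod.mk p.1) p.2) '' {p | p.2 ∈ F p.1} := by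
    ext e; simp [liftEdges]
  rw [h, Set.ncard_image_of_injective _ Sym2.map_prodMk_injective, ncard_eq_sum_ncard_fiber]
  rfl

lemma sum_ncard_restrictEdges_le (F : Set (Sym2 (ι × W))) :
    ∑ i, (restrictEdges F i).ncard ≤ F.ncard := by
  rw [← ncard_liftEdges]
  refine Set.ncard_le_ncard ?_
  rintro _ ⟨_, ⟨i, rfl⟩, e, he, rfl⟩
  exact he

lemma totalDominationNumber_disjointUnion {H : ι → SimpleGraph W}
    (hH : ∀ i, NoIsolatedVerts (H i)) :
    totalDominationNumber (disjointUnion H) = ∑ i, totalDominationNumber (H i) := by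
  refine le_antisymm ?_ (le_totalDominationNumber (noIsolatedVerts_disjointUnion_iff.mpr hH)
    fun S hS ↦ ?_)
  · choose T hT hTcard using fun i ↦ (hH i).exists_isTotalDominatingSet_ncard_eq
    calc totalDominationNumber (disjointUnion H) ≤ {p : ι × W | p.2 ∈ T p.1}.ncard :=
          totalDominationNumber_le_ncard (isTotalDominatingSet_disjointUnion_iff.mpr hT)
      _ = ∑ i, totalDominationNumber (H i) := by
          rw [ncard_eq_sum_ncard_fiber]
          exact Finset.sum_congr rfl fun i _ ↦ hTcard i
  · rw [ncard_eq_sum_ncard_fiber]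
    exact Finset.sum_le_sum fun i _ ↦
      totalDominationNumber_le_ncard (isTotalDominatingSet_disjointUnion_iff.mp hS i)

lemma totalDominationNumber_disjointUnion_deleteEdges {H : ι → SimpleGraph W}
    {F : Set (Sym2 (ι × W))} (hF : NoIsolatedVerts ((disjointUnion H).deleteEdges F)) :
    totalDominationNumber ((disjointUnion H).deleteEdges F) =
      ∑ i, totalDominationNumber ((H i).deleteEdges (restrictEdges F i)) := by
  rw [disjointUnion_deleteEdges]
  exact totalDominationNumber_disjointUnion (noIsolatedVerts_deleteEdges_restrictEdges hF)

end DisjointUnion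

inductive GadgetVert (b : ℕ) : Type
  | u | v | leafU | leafV | w (j : Fin b)
  deriving DecidableEq, Fintype

open GadgetVert

def GadgetVert.Adj {b : ℕ} : GadgetVert b → GadgetVert b → Prop
  | u, v | v, u | u, leafU | leafU, u | v, leafV | leafV, v
  | u, w _ | w _, u | v, w _ | w _, v => True
  | _, _ => False

def gadget (b : ℕ) : SimpleGraph (GadgetVert b) where
  Adj := GadgetVert.Adj
  symm := ⟨fun x y ↦ by cases x <;> cases y <;> simp [GadgetVert.Adj]⟩
  loopless := ⟨fun x ↦ by cases x <;> simp [GadgetVert.Adj]⟩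

section Gadget

variable {b : ℕ} {H : SimpleGraph (GadgetVert b)}

lemma gadget_adj_u {y : GadgetVert b} :
    (gadget b).Adj u y ↔ y = v ∨ y = leafU ∨ ∃ j, y = w j := by
  cases y <;> simp [gadget, GadgetVert.Adj]

lemma gadget_adj_leafU {y : GadgetVert b} : (gadget b).Adj leafU y ↔ y = u := by
  cases y <;> simp [gadget, GadgetVert.Adj]

lemma gadget_adj_leafV {y : GadgetVert b} : (gadget b).Adj leafV y ↔ y = v := by
  cases y <;> simp [gadget, GadgetVert.Adj]

lemma gadget_adj_w {j : Fin b} {y : GadgetVert b} :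
    (gadget b).Adj (w j) y ↔ y = u ∨ y = v := by
  cases y <;> simp [gadget, GadgetVert.Adj]

lemma ncard_pair_u_v : ({u, v} : Set (GadgetVert b)).ncard = 2 :=
  Set.ncard_pair (by simp)

lemma u_mem_and_v_mem_of_le_gadget (hH : H ≤ gadget b) {S : Set (GadgetVert b)}
    (hS : IsTotalDominatingSet H S) : u ∈ S ∧ v ∈ S := by
  obtain ⟨x, hx, hux⟩ := hS leafU
  obtain ⟨y, hy, hvy⟩ := hS leafV
  rw [gadget_adj_leafU.mp (hH hux)] at hx
  rw [gadget_adj_leafV.mp (hH hvy)] at hy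
  exact ⟨hx, hy⟩

lemma adj_u_or_adj_v_of_le_gadget (hH : H ≤ gadget b) (hni : NoIsolatedVerts H)
    {x : GadgetVert b} (hxu : x ≠ u) (hxv : x ≠ v) : H.Adj x u ∨ H.Adj x v := by
  obtain ⟨y, hxy⟩ := hni x
  have hy : y = u ∨ y = v := by
    cases x with
    | u | v => contradiction
    | leafU => exact Or.inl (gadget_adj_leafU.mp (hH hxy))
    | leafV => exact Or.inr (gadget_adj_leafV.mp (hH hxy))
    | w j => exact gadget_adj_w.mp (hH hxy)
  rcases hy with rfl | rfl
  exacts [Or.inl hxy, Or.inr hxy]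

lemma totalDominationNumber_le_two_of_le_gadget (hH : H ≤ gadget b) (hni : NoIsolatedVerts H)
    (huv : H.Adj u v) : totalDominationNumber H ≤ 2 := by
  refine (totalDominationNumber_le_ncard (S := {u, v}) fun x ↦ ?_).trans ncard_pair_u_v.le
  by_cases hxu : x = u
  · exact ⟨v, by simp, hxu ▸ huv⟩
  by_cases hxv : x = v
  · exact ⟨u, by simp, hxv ▸ huv.symm⟩
  rcases adj_u_or_adj_v_of_le_gadget hH hni hxu hxv with h | h
  exacts [⟨u, by simp, h⟩, ⟨v, by simp, h⟩]

lemma totalDominationNumber_le_three_of_le_gadget (hH : H ≤ gadget b) (hni : NoIsolatedVerts H)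
    {j : Fin b} (huw : H.Adj u (w j)) (hvw : H.Adj v (w j)) : totalDominationNumber H ≤ 3 := by
  refine (totalDominationNumber_le_ncard (S := {w j, u, v}) fun x ↦ ?_).trans
    ((Set.ncard_insert_le _ _).trans (by rw [ncard_pair_u_v]))
  by_cases hxu : x = u
  · exact ⟨w j, by simp, hxu ▸ huw⟩
  by_cases hxv : x = v
  · exact ⟨w j, by simp, hxv ▸ hvw⟩
  rcases adj_u_or_adj_v_of_le_gadget hH hni hxu hxv with h | h
  exacts [⟨u, by simp, h⟩, ⟨v, by simp, h⟩]

lemma totalDominationNumber_le_four_of_le_gadget (hH : H ≤ gadget b) (hni : NoIsolatedVerts H) :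
    totalDominationNumber H ≤ 4 := by
  refine (totalDominationNumber_le_ncard_add_ncard hni (S := {u, v}) (R := {u, v})
    fun x hx ↦ ?_).trans (by rw [ncard_pair_u_v])
  simp only [Set.mem_insert_iff, Set.mem_singleton_iff, not_or] at hx
  rcases adj_u_or_adj_v_of_le_gadget hH hni hx.1 hx.2 with h | h
  exacts [⟨u, by simp, h⟩, ⟨v, by simp, h⟩]

lemma three_le_totalDominationNumber_of_le_gadget (hH : H ≤ gadget b) (hni : NoIsolatedVerts H)
    (huv : ¬H.Adj u v) : 3 ≤ totalDominationNumber H := by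
  refine le_totalDominationNumber hni fun S hS ↦ ?_
  obtain ⟨hu, hv⟩ := u_mem_and_v_mem_of_le_gadget hH hS
  obtain ⟨y, hy, huy⟩ := hS u
  have hyv : y ≠ v := by rintro rfl; exact huv huy
  calc 3 = ({y, u, v} : Set (GadgetVert b)).ncard :=
        (Set.ncard_eq_three.mpr ⟨y, u, v, huy.ne', hyv, by simp, rfl⟩).symm
    _ ≤ S.ncard := Set.ncard_le_ncard (by simp [Set.insert_subset_iff, *])

lemma four_le_totalDominationNumber_of_le_gadget (hH : H ≤ gadget b) (hni : NoIsolatedVerts H)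
    (huv : ¬H.Adj u v) (huw : ∀ j, ¬H.Adj u (w j)) : 4 ≤ totalDominationNumber H := by
  refine le_totalDominationNumber hni fun S hS ↦ ?_
  obtain ⟨hu, hv⟩ := u_mem_and_v_mem_of_le_gadget hH hS
  have hleafU : leafU ∈ S := by
    obtain ⟨y, hy, huy⟩ := hS u
    rcases gadget_adj_u.mp (hH huy) with rfl | rfl | ⟨j, rfl⟩
    exacts [absurd huy huv, hy, absurd huy (huw j)]
  obtain ⟨z, hz, hvz⟩ := hS v
  have hzu : z ≠ u := by rintro rfl; exact huv hvz.symm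
  have hzleafU : z ≠ leafU := by rintro rfl; simpa using gadget_adj_leafU.mp (hH hvz.symm)
  calc 4 = ({z, u, v, leafU} : Set (GadgetVert b)).ncard :=
        (Set.ncard_eq_four.mpr ⟨z, u, v, leafU, hzu, hvz.ne', hzleafU, by simp, by simp, by simp,
          rfl⟩).symm
    _ ≤ S.ncard := Set.ncard_le_ncard (by simp [Set.insert_subset_iff, *])

lemma succ_le_ncard_of_forall_mem {F : Set (Sym2 (GadgetVert b))} (huv : s(u, v) ∈ F)
    (huvw : ∀ j, s(u, w j) ∈ F ∨ s(v, w j) ∈ F) : b + 1 ≤ F.ncard := by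
  have : ∀ j, ∃ e ∈ F, e = s(u, w j) ∨ e = s(v, w j) := fun j ↦
    (huvw j).elim (fun h ↦ ⟨_, h, Or.inl rfl⟩) fun h ↦ ⟨_, h, Or.inr rfl⟩
  choose e heF he using this
  let f : Option (Fin b) → Sym2 (GadgetVert b) := fun o ↦ o.elim s(u, v) e
  have hf : Function.Injective f := by
    rintro (_ | j) (_ | j') h <;> simp only [f, Option.elim] at h
    · rfl
    · rcases he j' with h' | h' <;> simp [h'] at h
    · rcases he j with h' | h' <;> simp [h'] at h
    · rcases he j with hj | hj <;> rcases he j' with hj' | hj' <;> simp_all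
  calc b + 1 = (Set.range f).ncard := by rw [Set.ncard_range_of_injective hf]; simp
    _ ≤ F.ncard := Set.ncard_le_ncard (by rintro _ ⟨_ | j, rfl⟩; exacts [huv, heF j])

end Gadget

section GadgetDeleteEdges

variable {b : ℕ} {F : Set (Sym2 (GadgetVert b))}

lemma totalDominationNumber_gadget_deleteEdges_cases
    (hni : NoIsolatedVerts ((gadget b).deleteEdges F)) :
    totalDominationNumber ((gadget b).deleteEdges F) ≤ 2 ∨
      (totalDominationNumber ((gadget b).deleteEdges F) ≤ 3 ∧ 1 ≤ F.ncard) ∨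
      (totalDominationNumber ((gadget b).deleteEdges F) ≤ 4 ∧ b + 1 ≤ F.ncard) := by
  have hH := (gadget b).deleteEdges_le F
  have hadj {x y : GadgetVert b} (hxy : (gadget b).Adj x y) (he : s(x, y) ∉ F) :
      ((gadget b).deleteEdges F).Adj x y :=
    (SimpleGraph.deleteEdges_adj ..).mpr ⟨hxy, he⟩
  by_cases huv : s(u, v) ∈ F
  swap
  · exact .inl (totalDominationNumber_le_two_of_le_gadget hH hni (hadj trivial huv))
  right
  by_cases hw : ∃ j, s(u, w j) ∉ F ∧ s(v, w j) ∉ F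
  · obtain ⟨j, huw, hvw⟩ := hw
    exact .inl ⟨totalDominationNumber_le_three_of_le_gadget hH hni (hadj trivial huw)
      (hadj trivial hvw), (Set.ncard_pos F.toFinite).mpr ⟨_, huv⟩⟩
  · push Not at hw
    exact .inr ⟨totalDominationNumber_le_four_of_le_gadget hH hni,
      succ_le_ncard_of_forall_mem huv fun j ↦ or_iff_not_imp_left.mpr (hw j)⟩

lemma totalDominationNumber_gadget_deleteEdges_le (hb : 1 ≤ b)
    (hni : NoIsolatedVerts ((gadget b).deleteEdges F)) :
    totalDominationNumber ((gadget b).deleteEdges F) ≤ 2 + F.ncard := by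
  rcases totalDominationNumber_gadget_deleteEdges_cases hni with h | h | h <;> omega

lemma succ_le_ncard_of_four_le_totalDominationNumber
    (hni : NoIsolatedVerts ((gadget b).deleteEdges F))
    (h : 4 ≤ totalDominationNumber ((gadget b).deleteEdges F)) : b + 1 ≤ F.ncard := by
  rcases totalDominationNumber_gadget_deleteEdges_cases hni with h' | h' | h' <;> omega

end GadgetDeleteEdges

lemma card_add_le_sum_of_three_mul_card_lt_sum {ι : Type*} [Fintype ι] [DecidableEq ι]
    {g c : ι → ℕ} {b : ℕ} (hg : ∀ i, g i ≤ 4) (hgc : ∀ i, g i ≤ 2 + c i)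
    (hc : ∀ i, 4 ≤ g i → b + 1 ≤ c i) (h : 3 * Fintype.card ι < ∑ i, g i) :
    Fintype.card ι + b ≤ ∑ i, c i := by
  obtain ⟨i₀, hi₀⟩ : ∃ i, 4 ≤ g i := by
    by_contra! hlt
    have := Finset.sum_le_sum fun i (_ : i ∈ Finset.univ) ↦ Nat.le_of_lt_succ (hlt i)
    simp only [Finset.sum_const, Finset.card_univ, smul_eq_mul] at this
    omega
  have hrest : ∑ i ∈ Finset.univ.erase i₀, g i ≤
      2 * (Fintype.card ι - 1) + ∑ i ∈ Finset.univ.erase i₀, c i :=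
    calc _ ≤ ∑ i ∈ Finset.univ.erase i₀, (2 + c i) := Finset.sum_le_sum fun i _ ↦ hgc i
      _ = _ := by
        rw [Finset.sum_add_distrib, Finset.sum_const, Finset.card_erase_of_mem
          (Finset.mem_univ _), Finset.card_univ, smul_eq_mul, mul_comm]
  rw [← Finset.add_sum_erase _ _ (Finset.mem_univ i₀)] at h ⊢
  have := hc i₀ hi₀
  have := hg i₀
  have : 0 < Fintype.card ι := Fintype.card_pos_iff.mpr ⟨i₀⟩
  omega

section Cuts

variable {b : ℕ}

def cutUV (b : ℕ) : Set (Sym2 (GadgetVert b)) := {s(u, v)}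

def cutUVW (b : ℕ) : Set (Sym2 (GadgetVert b)) := insert s(u, v) (Set.range fun j ↦ s(u, w j))

lemma cutUV_subset_cutUVW : cutUV b ⊆ cutUVW b :=
  Set.singleton_subset_iff.mpr (Set.mem_insert _ _)

lemma cutUVW_subset_edgeSet : cutUVW b ⊆ (gadget b).edgeSet := by
  rintro _ (rfl | ⟨j, rfl⟩) <;> trivial

lemma ncard_cutUV : (cutUV b).ncard = 1 :=
  Set.ncard_singleton _

lemma ncard_cutUVW : (cutUVW b).ncard = b + 1 := by
  have hinj : Function.Injective fun j : Fin b ↦ s(u, w j) := fun j j' h ↦ by simpa using h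
  rw [cutUVW, Set.ncard_insert_of_notMem (by simp), Set.ncard_range_of_injective hinj,
    Nat.card_eq_fintype_card, Fintype.card_fin]

lemma noIsolatedVerts_gadget_deleteEdges_cutUVW :
    NoIsolatedVerts ((gadget b).deleteEdges (cutUVW b)) := by
  have hadj {x y : GadgetVert b} (hxy : (gadget b).Adj x y) (he : s(x, y) ∉ cutUVW b) :
      ∃ y, ((gadget b).deleteEdges (cutUVW b)).Adj x y :=
    ⟨y, (SimpleGraph.deleteEdges_adj ..).mpr ⟨hxy, he⟩⟩
  intro x
  cases x with
  | u => exact hadj (y := leafU) trivial (by simp [cutUVW])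
  | v => exact hadj (y := leafV) trivial (by simp [cutUVW])
  | leafU => exact hadj (y := u) trivial (by simp [cutUVW])
  | leafV => exact hadj (y := v) trivial (by simp [cutUVW])
  | w j => exact hadj (y := v) trivial (by simp [cutUVW])

lemma three_le_totalDominationNumber_cutUV :
    3 ≤ totalDominationNumber ((gadget b).deleteEdges (cutUV b)) := by
  have hni := noIsolatedVerts_gadget_deleteEdges_cutUVW.mono
    ((gadget b).deleteEdges_anti (cutUV_subset_cutUVW (b := b)))
  refine three_le_totalDominationNumber_of_le_gadget ((gadget b).deleteEdges_le _) hni ?_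
  simp [cutUV]

lemma four_le_totalDominationNumber_cutUVW :
    4 ≤ totalDominationNumber ((gadget b).deleteEdges (cutUVW b)) := by
  refine four_le_totalDominationNumber_of_le_gadget ((gadget b).deleteEdges_le _)
    noIsolatedVerts_gadget_deleteEdges_cutUVW ?_ fun j ↦ ?_ <;> simp [cutUVW]

end Cuts

section GadgetUnion

variable {k b : ℕ}

abbrev gadgetUnion (k b : ℕ) : SimpleGraph (Fin k × GadgetVert b) :=
  disjointUnion fun _ ↦ gadget b

lemma noIsolatedVerts_gadget : NoIsolatedVerts (gadget b) :=
  noIsolatedVerts_gadget_deleteEdges_cutUVW.mono ((gadget b).deleteEdges_le _)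

lemma totalDominationNumber_gadget : totalDominationNumber (gadget b) = 2 := by
  refine le_antisymm (totalDominationNumber_le_two_of_le_gadget le_rfl noIsolatedVerts_gadget
    trivial) (le_totalDominationNumber noIsolatedVerts_gadget fun S hS ↦ ?_)
  obtain ⟨hu, hv⟩ := u_mem_and_v_mem_of_le_gadget le_rfl hS
  exact ncard_pair_u_v.symm.le.trans (Set.ncard_le_ncard (Set.pair_subset hu hv))

lemma totalDominationNumber_gadgetUnion : totalDominationNumber (gadgetUnion k b) = 2 * k := by
  simp [totalDominationNumber_disjointUnion fun _ ↦ noIsolatedVerts_gadget,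
    totalDominationNumber_gadget, mul_comm]

section Cut

variable {C : Fin k → Set (Sym2 (GadgetVert b))}

lemma liftEdges_subset_edgeSet_gadgetUnion (hC : ∀ i, C i ⊆ cutUVW b) :
    liftEdges C ⊆ (gadgetUnion k b).edgeSet :=
  liftEdges_subset_edgeSet fun i ↦ (hC i).trans cutUVW_subset_edgeSet

lemma noIsolatedVerts_gadgetUnion_deleteEdges_liftEdges (hC : ∀ i, C i ⊆ cutUVW b) :
    NoIsolatedVerts ((gadgetUnion k b).deleteEdges (liftEdges C)) := by
  rw [disjointUnion_deleteEdges_liftEdges, noIsolatedVerts_disjointUnion_iff]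
  exact fun i ↦
    noIsolatedVerts_gadget_deleteEdges_cutUVW.mono ((gadget b).deleteEdges_anti (hC i))

lemma totalDominationNumber_gadgetUnion_deleteEdges_liftEdges (hC : ∀ i, C i ⊆ cutUVW b) :
    totalDominationNumber ((gadgetUnion k b).deleteEdges (liftEdges C)) =
      ∑ i, totalDominationNumber ((gadget b).deleteEdges (C i)) := by
  simp only [totalDominationNumber_disjointUnion_deleteEdges
    (noIsolatedVerts_gadgetUnion_deleteEdges_liftEdges hC), restrictEdges_liftEdges]

end Cut

lemma exists_cut_gadgetUnion :
    ∃ F ⊆ (gadgetUnion k b).edgeSet, F.ncard = k ∧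
      NoIsolatedVerts ((gadgetUnion k b).deleteEdges F) ∧
      totalDominationNumber (gadgetUnion k b) + k ≤
        totalDominationNumber ((gadgetUnion k b).deleteEdges F) := by
  have hC : ∀ _ : Fin k, cutUV b ⊆ cutUVW b := fun _ ↦ cutUV_subset_cutUVW
  refine ⟨_, liftEdges_subset_edgeSet_gadgetUnion hC, by simp [ncard_liftEdges, ncard_cutUV],
    noIsolatedVerts_gadgetUnion_deleteEdges_liftEdges hC, ?_⟩
  rw [totalDominationNumber_gadgetUnion,
    totalDominationNumber_gadgetUnion_deleteEdges_liftEdges hC]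
  calc 2 * k + k = ∑ _i : Fin k, 3 := by simp; ring
    _ ≤ _ := Finset.sum_le_sum fun _ _ ↦ three_le_totalDominationNumber_cutUV

lemma exists_cut_gadgetUnion_succ (hk : 1 ≤ k) :
    ∃ F ⊆ (gadgetUnion k b).edgeSet, F.ncard = k + b ∧
      NoIsolatedVerts ((gadgetUnion k b).deleteEdges F) ∧
      totalDominationNumber (gadgetUnion k b) + (k + 1) ≤
        totalDominationNumber ((gadgetUnion k b).deleteEdges F) := by
  let i₀ : Fin k := ⟨0, hk⟩
  let C : Fin k → Set (Sym2 (GadgetVert b)) := fun i ↦ if i = i₀ then cutUVW b else cutUV b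
  have hC : ∀ i, C i ⊆ cutUVW b := fun i ↦ by
    by_cases hi : i = i₀ <;> simp [C, hi, cutUV_subset_cutUVW]
  refine ⟨_, liftEdges_subset_edgeSet_gadgetUnion hC, ?_,
    noIsolatedVerts_gadgetUnion_deleteEdges_liftEdges hC, ?_⟩
  · rw [ncard_liftEdges]
    calc ∑ i, (C i).ncard = ∑ i, (1 + if i = i₀ then b else 0) :=
          Finset.sum_congr rfl fun i _ ↦ by
            by_cases hi : i = i₀ <;> simp [C, hi, ncard_cutUV, ncard_cutUVW, add_comm]
      _ = k + b := by simp [Finset.sum_add_distrib]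
  · rw [totalDominationNumber_gadgetUnion,
      totalDominationNumber_gadgetUnion_deleteEdges_liftEdges hC]
    calc 2 * k + (k + 1) = ∑ i, (3 + if i = i₀ then 1 else 0) := by
          simp [Finset.sum_add_distrib]; ring
      _ ≤ _ := Finset.sum_le_sum fun i _ ↦ by
          by_cases hi : i = i₀
          · simpa [C, hi] using four_le_totalDominationNumber_cutUVW
          · simpa [C, hi] using three_le_totalDominationNumber_cutUV

lemma totalDominationNumber_gadgetUnion_deleteEdges_le (hb : 1 ≤ b)
    {F : Set (Sym2 (Fin k × GadgetVert b))}
    (hF : NoIsolatedVerts ((gadgetUnion k b).deleteEdges F)) :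
    totalDominationNumber ((gadgetUnion k b).deleteEdges F) ≤ 2 * k + F.ncard := by
  rw [totalDominationNumber_disjointUnion_deleteEdges hF]
  calc _ ≤ ∑ i, (2 + (restrictEdges F i).ncard) := Finset.sum_le_sum fun i _ ↦
        totalDominationNumber_gadget_deleteEdges_le hb
          (noIsolatedVerts_deleteEdges_restrictEdges hF i)
    _ ≤ 2 * k + F.ncard := by
        rw [Finset.sum_add_distrib]
        simpa [mul_comm] using sum_ncard_restrictEdges_le F

lemma add_le_ncard_of_three_mul_lt_totalDominationNumber (hb : 1 ≤ b)
    {F : Set (Sym2 (Fin k × GadgetVert b))}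
    (hF : NoIsolatedVerts ((gadgetUnion k b).deleteEdges F))
    (h : 3 * k < totalDominationNumber ((gadgetUnion k b).deleteEdges F)) : k + b ≤ F.ncard := by
  rw [totalDominationNumber_disjointUnion_deleteEdges hF] at h
  have hi := noIsolatedVerts_deleteEdges_restrictEdges hF
  have := card_add_le_sum_of_three_mul_card_lt_sum (b := b)
    (fun i ↦ totalDominationNumber_le_four_of_le_gadget ((gadget b).deleteEdges_le _) (hi i))
    (fun i ↦ totalDominationNumber_gadget_deleteEdges_le hb (hi i))
    (fun i ↦ succ_le_ncard_of_four_le_totalDominationNumber (hi i)) (by simpa using h)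
  simpa using this.trans (sum_ncard_restrictEdges_le F)

lemma kTotalBondage_gadgetUnion (hb : 1 ≤ b) : kTotalBondage (gadgetUnion k b) k = k := by
  refine kTotalBondage_eq_of_forall_le exists_cut_gadgetUnion fun F _ hF hγ ↦ ?_
  have := totalDominationNumber_gadgetUnion_deleteEdges_le hb hF
  rw [totalDominationNumber_gadgetUnion] at hγ
  omega

lemma kTotalBondage_gadgetUnion_succ (hk : 1 ≤ k) (hb : 1 ≤ b) :
    kTotalBondage (gadgetUnion k b) (k + 1) = k + b := by
  refine kTotalBondage_eq_of_forall_le (exists_cut_gadgetUnion_succ hk) fun F _ hF hγ ↦ ?_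
  rw [totalDominationNumber_gadgetUnion] at hγ
  exact add_le_ncard_of_three_mul_lt_totalDominationNumber hb hF (by omega)

end GadgetUnion

/-- For any positive integers `k` and `b`, there exists a finite graph `G` with
no isolated vertices such that `b_t^k(G)` and `b_t^{k+1}(G)` exist and
`b_t^{k+1}(G) = b_t^k(G) + b`. -/
theorem exists_graph_kTotalBondage_succ_eq_add (k b : ℕ) (hk : 1 ≤ k)
    (hb : 1 ≤ b) :
    ∃ (V : Type) (_ : Fintype V) (G : SimpleGraph V),
      NoIsolatedVerts G ∧
      (∃ F : Set (Sym2 V), F ⊆ G.edgeSet ∧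
        NoIsolatedVerts (G.deleteEdges F) ∧
        totalDominationNumber G + k ≤ totalDominationNumber (G.deleteEdges F)) ∧
      (∃ F : Set (Sym2 V), F ⊆ G.edgeSet ∧
        NoIsolatedVerts (G.deleteEdges F) ∧
        totalDominationNumber G + (k + 1) ≤
          totalDominationNumber (G.deleteEdges F)) ∧
      kTotalBondage G (k + 1) = kTotalBondage G k + b := by
  obtain ⟨F₁, hF₁, -, hF₁G, hF₁γ⟩ := exists_cut_gadgetUnion (k := k) (b := b)
  obtain ⟨F₂, hF₂, -, hF₂G, hF₂γ⟩ := exists_cut_gadgetUnion_succ (b := b) hk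
  refine ⟨_, inferInstance, gadgetUnion k b,
    noIsolatedVerts_disjointUnion_iff.mpr fun _ ↦ noIsolatedVerts_gadget,
    ⟨F₁, hF₁, hF₁G, hF₁γ⟩, ⟨F₂, hF₂, hF₂G, hF₂γ⟩, ?_⟩
  rw [kTotalBondage_gadgetUnion_succ hk hb, kTotalBondage_gadgetUnion hb]
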